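/- Lemma 2 (marginal density, multivariate, as an integral identity): let Ψ be an n×n real positive definite matrix and d, μ, y ∈ ℝⁿ. Set Σ = Ψ + d·dᵀ, η = dᵀΨ⁻¹(y−μ)/(1 + dᵀΨ⁻¹d) and ζ = (1 + dᵀΨ⁻¹d)^{-1/2}. Then ∫₀^∞ 2·φₙ(y; μ + t·d, Ψ)·φ(t; 0, 1) dt = 2·φₙ(y; μ, Σ)·Φ(η/ζ). -/

import Mathlib

/-!
With `w = y − μ`, `s = 1 + dᵀΨ⁻¹d` and `b = dᵀΨ⁻¹w`, the exponent of
`φₙ(y; μ + t d, Ψ)·φ(t)` is `-½ (wᵀΨ⁻¹w − 2bt + s t²)`. Completing the square in `t` and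
recognising `wᵀΨ⁻¹w − b²/s = wᵀΣ⁻¹w` (Sherman–Morrison) and `det Σ = s·det Ψ` (matrix
determinant lemma) factors the integrand as `2√s·φₙ(y; μ, Σ)·φ(√s t − b/√s)`. The substitution
`x = b/√s − √s t` turns the integral over `t > 0` into `Φ(b/√s)/√s`, and `b/√s = η/ζ`.
-/

open MeasureTheory Real Matrix

/-- The standard normal density `φ(w) = (2π)^{-1/2} exp(-w²/2)`. -/
noncomputable def stdNormalPDF (w : ℝ) : ℝ := (2 * π) ^ (-(1 : ℝ) / 2) * Real.exp (-w ^ 2 / 2)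

/-- The standard normal distribution function `Φ(x) = ∫_{-∞}^x φ(u) du`. -/
noncomputable def stdNormalCDF (x : ℝ) : ℝ := ∫ u in Set.Iic x, stdNormalPDF u

/-- The normal density with mean `m` and variance `s2 > 0`:
`φ(x; m, s²) = (2πs²)^{-1/2} exp(-(x−m)²/(2s²))`. -/
noncomputable def normalPDF (m s2 x : ℝ) : ℝ :=
  (2 * π * s2) ^ (-(1 : ℝ) / 2) * Real.exp (-(x - m) ^ 2 / (2 * s2))

/-- The `n`-dimensional normal density with mean `m` and positive definite covariance `V`:
`φₙ(y; m, V) = (2π)^{-n/2} (det V)^{-1/2} exp(-½ (y−m)ᵀ V⁻¹ (y−m))`. -/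
noncomputable def mvNormalPDF {n : ℕ} (m : Fin n → ℝ) (V : Matrix (Fin n) (Fin n) ℝ)
    (y : Fin n → ℝ) : ℝ :=
  (2 * π) ^ (-(n : ℝ) / 2) * V.det ^ (-(1 : ℝ) / 2) *
    Real.exp (-(1 / 2) * ((y - m) ⬝ᵥ (V⁻¹ *ᵥ (y - m))))

open Set

theorem Real.rpow_neg_one_half_eq_inv_sqrt {x : ℝ} (hx : 0 ≤ x) :
    x ^ (-(1 : ℝ) / 2) = (√x)⁻¹ := by
  rw [sqrt_eq_rpow, ← rpow_neg hx]
  norm_num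

namespace Matrix

variable {m : Type*} [Fintype m] [DecidableEq m]

theorem det_add_vecMulVec {R : Type*} [CommRing R] {A : Matrix m m R} (hA : IsUnit A.det)
    (u v : m → R) : (A + vecMulVec u v).det = A.det * (1 + v ⬝ᵥ A⁻¹ *ᵥ u) := by
  rw [vecMulVec_eq (ι := Unit), det_add_replicateCol_mul_replicateRow hA, det_unique (n := Unit),
    ← replicateRow_vecMul, Matrix.add_apply, one_apply_eq, replicateRow_mul_replicateCol_apply,
    dotProduct_mulVec]

omit [DecidableEq m] in
theorem IsSymm.dotProduct_mulVec_comm {R : Type*} [CommSemiring R] {A : Matrix m m R}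
    (hA : A.IsSymm) (x y : m → R) : x ⬝ᵥ A *ᵥ y = y ⬝ᵥ A *ᵥ x := by
  rw [dotProduct_mulVec, ← mulVec_transpose, hA.eq, dotProduct_comm]

variable {K : Type*} [Field K]

theorem inv_add_vecMulVec {A : Matrix m m K} (hA : IsUnit A.det) (u v : m → K)
    (hs : 1 + v ⬝ᵥ A⁻¹ *ᵥ u ≠ 0) :
    (A + vecMulVec u v)⁻¹ =
      A⁻¹ - (1 + v ⬝ᵥ A⁻¹ *ᵥ u)⁻¹ • vecMulVec (A⁻¹ *ᵥ u) (v ᵥ* A⁻¹) := by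
  apply inv_eq_right_inv
  rw [Matrix.add_mul, Matrix.mul_sub, Matrix.mul_sub, Matrix.mul_smul, Matrix.mul_smul,
    mul_nonsing_inv _ hA, mul_vecMulVec, mulVec_mulVec, mul_nonsing_inv _ hA, one_mulVec,
    vecMulVec_mul, vecMulVec_mul_vecMulVec, vecMulVec_smul, smul_smul]
  set s := 1 + v ⬝ᵥ A⁻¹ *ᵥ u
  have hcoef : s⁻¹ * (v ⬝ᵥ A⁻¹ *ᵥ u) = 1 - s⁻¹ := by
    field_simp; simp [s]
  rw [hcoef, sub_smul, one_smul]
  abel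

theorem IsSymm.dotProduct_inv_add_vecMulVec_mulVec {A : Matrix m m K} (hA : A.IsSymm)
    (hdet : IsUnit A.det) (d w : m → K) (hs : 1 + d ⬝ᵥ A⁻¹ *ᵥ d ≠ 0) :
    w ⬝ᵥ (A + vecMulVec d d)⁻¹ *ᵥ w =
      w ⬝ᵥ A⁻¹ *ᵥ w - (d ⬝ᵥ A⁻¹ *ᵥ w) ^ 2 / (1 + d ⬝ᵥ A⁻¹ *ᵥ d) := by
  rw [inv_add_vecMulVec hdet d d hs, sub_mulVec, dotProduct_sub, smul_mulVec, dotProduct_smul,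
    vecMulVec_mulVec, ← dotProduct_mulVec]
  simp only [MulOpposite.smul_eq_mul_unop, MulOpposite.unop_op, dotProduct_smul, smul_eq_mul,
    hA.inv.dotProduct_mulVec_comm w d]
  ring

theorem IsSymm.dotProduct_inv_mulVec_sub_smul_add_sq {A : Matrix m m K} (hA : A.IsSymm)
    (hdet : IsUnit A.det) (d w : m → K) (hs : 1 + d ⬝ᵥ A⁻¹ *ᵥ d ≠ 0) (t : K) :
    (w - t • d) ⬝ᵥ A⁻¹ *ᵥ (w - t • d) + t ^ 2 =
      w ⬝ᵥ (A + vecMulVec d d)⁻¹ *ᵥ w +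
        (1 + d ⬝ᵥ A⁻¹ *ᵥ d) * (t - (d ⬝ᵥ A⁻¹ *ᵥ w) / (1 + d ⬝ᵥ A⁻¹ *ᵥ d)) ^ 2 := by
  rw [hA.dotProduct_inv_add_vecMulVec_mulVec hdet d w hs]
  simp only [mulVec_sub, mulVec_smul, sub_dotProduct, dotProduct_sub, smul_dotProduct,
    dotProduct_smul, smul_eq_mul, hA.inv.dotProduct_mulVec_comm w d]
  field_simp
  ring

end Matrix

theorem Matrix.PosDef.one_add_dotProduct_inv_mulVec_pos {m : Type*} [Fintype m] [DecidableEq m]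
    {A : Matrix m m ℝ} (hA : A.PosDef) (d : m → ℝ) : 0 < 1 + d ⬝ᵥ A⁻¹ *ᵥ d := by
  have := hA.inv.posSemidef.dotProduct_mulVec_nonneg d
  simp only [star_trivial] at this
  linarith

theorem integral_comp_sub_right_Ioi {E : Type*} [NormedAddCommGroup E] [NormedSpace ℝ E]
    (f : ℝ → E) (a c : ℝ) : ∫ x in Ioi a, f (x - c) = ∫ x in Ioi (a - c), f x := by
  have he : MeasurableEmbedding (· - c : ℝ → ℝ) :=
    (Homeomorph.subRight c).isClosedEmbedding.measurableEmbedding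
  simpa using
    (measurePreserving_sub_right volume c).setIntegral_preimage_emb he f (Ioi (a - c))

theorem integral_Ioi_zero_comp_mul_sub {E : Type*} [NormedAddCommGroup E] [NormedSpace ℝ E]
    (f : ℝ → E) {σ : ℝ} (hσ : 0 < σ) (c : ℝ) :
    ∫ t in Ioi 0, f (σ * t - c) = σ⁻¹ • ∫ x in Iic c, f (-x) := by
  rw [integral_comp_mul_left_Ioi (fun x ↦ f (x - c)) 0 hσ, mul_zero,
    integral_comp_sub_right_Ioi, zero_sub, integral_comp_neg_Iic]

theorem stdNormalPDF_neg (w : ℝ) : stdNormalPDF (-w) = stdNormalPDF w := by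
  simp [stdNormalPDF]

theorem setIntegral_Ioi_stdNormalPDF_mul_sub {σ : ℝ} (hσ : 0 < σ) (c : ℝ) :
    ∫ t in Ioi 0, stdNormalPDF (σ * t - c) = σ⁻¹ * stdNormalCDF c := by
  simp_rw [integral_Ioi_zero_comp_mul_sub stdNormalPDF hσ c, stdNormalPDF_neg, stdNormalCDF,
    smul_eq_mul]

theorem mvNormalPDF_add_smul_mul_normalPDF {n : ℕ} {Ψ : Matrix (Fin n) (Fin n) ℝ}
    (hΨ : Ψ.PosDef) (d μ y : Fin n → ℝ) (t : ℝ) :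
    mvNormalPDF (μ + t • d) Ψ y * normalPDF 0 1 t =
      √(1 + d ⬝ᵥ Ψ⁻¹ *ᵥ d) * mvNormalPDF μ (Ψ + vecMulVec d d) y *
        stdNormalPDF (√(1 + d ⬝ᵥ Ψ⁻¹ *ᵥ d) * t -
          d ⬝ᵥ Ψ⁻¹ *ᵥ (y - μ) / √(1 + d ⬝ᵥ Ψ⁻¹ *ᵥ d)) := by
  have hs := hΨ.one_add_dotProduct_inv_mulVec_pos d
  have hdetΨ : IsUnit Ψ.det := hΨ.det_pos.ne'.isUnit
  rw [mvNormalPDF, mvNormalPDF, normalPDF, stdNormalPDF]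
  set s := 1 + d ⬝ᵥ Ψ⁻¹ *ᵥ d
  set b := d ⬝ᵥ Ψ⁻¹ *ᵥ (y - μ)
  set q := (y - μ) ⬝ᵥ (Ψ + vecMulVec d d)⁻¹ *ᵥ (y - μ)
  set Q := (y - (μ + t • d)) ⬝ᵥ Ψ⁻¹ *ᵥ (y - (μ + t • d))
  have hsq : Q + t ^ 2 = q + s * (t - b / s) ^ 2 := by
    simp only [Q, ← sub_sub]
    exact (isHermitian_iff_isSymm.mp hΨ.isHermitian).dotProduct_inv_mulVec_sub_smul_add_sq
      hdetΨ d (y - μ) hs.ne' t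
  have hσsq : (√s * t - b / √s) ^ 2 = s * (t - b / s) ^ 2 := by
    field_simp
    rw [sq_sqrt hs.le]
    ring
  have hexp : Real.exp (-(1 / 2) * Q) * Real.exp (-(t - 0) ^ 2 / (2 * 1)) =
      Real.exp (-(1 / 2) * q) * Real.exp (-(√s * t - b / √s) ^ 2 / 2) := by
    rw [← Real.exp_add, ← Real.exp_add]
    congr 1
    linear_combination (-1 / 2 : ℝ) * hsq + (1 / 2 : ℝ) * hσsq
  have hdet : (Ψ + vecMulVec d d).det ^ (-(1 : ℝ) / 2) = Ψ.det ^ (-(1 : ℝ) / 2) * (√s)⁻¹ := by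
    rw [det_add_vecMulVec hdetΨ, mul_rpow hΨ.det_pos.le hs.le,
      rpow_neg_one_half_eq_inv_sqrt hs.le]
  rw [hdet, mul_one (2 * π)]
  calc _ = (2 * π) ^ (-(n : ℝ) / 2) * Ψ.det ^ (-(1 : ℝ) / 2) * (2 * π) ^ (-(1 : ℝ) / 2) *
        (Real.exp (-(1 / 2) * Q) * Real.exp (-(t - 0) ^ 2 / (2 * 1))) := by ring
    _ = _ := by
      rw [hexp]
      field_simp

/-- Lemma 2 (marginal density, multivariate, as an integral identity): for `Ψ` positive
definite, with `Σ = Ψ + d·dᵀ`, `η = dᵀΨ⁻¹(y−μ)/(1 + dᵀΨ⁻¹d)` and `ζ = (1 + dᵀΨ⁻¹d)^{-1/2}`,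
`∫₀^∞ 2·φₙ(y; μ + t·d, Ψ)·φ(t; 0, 1) dt = 2·φₙ(y; μ, Σ)·Φ(η/ζ)`. -/
theorem mv_skewNormal_marginal_density {n : ℕ}
    (Ψ : Matrix (Fin n) (Fin n) ℝ) (hΨ : Ψ.PosDef)
    (d μ y : Fin n → ℝ)
    (η ζ : ℝ)
    (hη : η = d ⬝ᵥ (Ψ⁻¹ *ᵥ (y - μ)) / (1 + d ⬝ᵥ (Ψ⁻¹ *ᵥ d)))
    (hζ : ζ = (1 + d ⬝ᵥ (Ψ⁻¹ *ᵥ d)) ^ (-(1 : ℝ) / 2)) :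
    ∫ t in Set.Ioi (0 : ℝ), 2 * mvNormalPDF (μ + t • d) Ψ y * normalPDF 0 1 t =
      2 * mvNormalPDF μ (Ψ + vecMulVec d d) y * stdNormalCDF (η / ζ) := by
  have hs := hΨ.one_add_dotProduct_inv_mulVec_pos d
  set s := 1 + d ⬝ᵥ (Ψ⁻¹ *ᵥ d)
  set b := d ⬝ᵥ (Ψ⁻¹ *ᵥ (y - μ))
  have hηζ : η / ζ = b / √s := by
    rw [hη, hζ, rpow_neg_one_half_eq_inv_sqrt hs.le]
    field_simp
    rw [sq_sqrt hs.le]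
  calc ∫ t in Set.Ioi (0 : ℝ), 2 * mvNormalPDF (μ + t • d) Ψ y * normalPDF 0 1 t
      = ∫ t in Set.Ioi (0 : ℝ),
          2 * √s * mvNormalPDF μ (Ψ + vecMulVec d d) y * stdNormalPDF (√s * t - b / √s) :=
        setIntegral_congr_fun measurableSet_Ioi fun t _ ↦ by
          rw [mul_assoc, mvNormalPDF_add_smul_mul_normalPDF hΨ]
          ring
    _ = 2 * mvNormalPDF μ (Ψ + vecMulVec d d) y * stdNormalCDF (η / ζ) := by
      rw [integral_const_mul, setIntegral_Ioi_stdNormalPDF_mul_sub (sqrt_pos.mpr hs), hηζ]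
      field_simp
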